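/- Consider single-node Clip21-GD: x_{k+1} = x_k − γv_k, v_k = v_{k-1} + clip_τ(∇f(x_k) − v_{k-1}), where f has L-Lipschitz gradient. Then for every k ≥ 0, ‖∇f(x_{k+1}) − v_k‖ ≤ max{0, ‖∇f(x_k) − v_{k-1}‖ − τ} + Lγ‖v_k‖. -/

import Mathlib

noncomputable def clip {E : Type*} [NormedAddCommGroup E] [NormedSpace ℝ E]
    (τ : ℝ) (x : E) : E := if ‖x‖ ≤ τ then x else (τ / ‖x‖) • x

lemma norm_sub_clip {E : Type*} [NormedAddCommGroup E] [NormedSpace ℝ E]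
    {τ : ℝ} (hτ : 0 ≤ τ) (u : E) : ‖u - clip τ u‖ = max 0 (‖u‖ - τ) := by
  unfold clip
  split_ifs with h
  · simp [h]
  · replace h : τ < ‖u‖ := not_le.mp h
    have hu : 0 < ‖u‖ := hτ.trans_lt h
    have hcoef : 0 ≤ 1 - τ / ‖u‖ := sub_nonneg.mpr ((div_le_one hu).mpr h.le)
    calc ‖u - (τ / ‖u‖) • u‖ = (1 - τ / ‖u‖) * ‖u‖ := by
          rw [← Real.norm_of_nonneg hcoef, ← norm_smul, sub_smul, one_smul]
      _ = max 0 (‖u‖ - τ) := by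
          rw [max_eq_right (by linarith), sub_mul, div_mul_cancel₀ _ hu.ne', one_mul]

theorem clip21_gd_recursion_bound_general {d : ℕ} (τ L γ : ℝ) (hτ : 0 < τ)
    (hγ : 0 < γ)
    (f : EuclideanSpace ℝ (Fin d) → ℝ)
    (hlip : ∀ x y, ‖gradient f x - gradient f y‖ ≤ L * ‖x - y‖)
    (x v : ℕ → EuclideanSpace ℝ (Fin d))
    (hv : ∀ k : ℕ, v (k + 1) = v k + clip τ (gradient f (x k) - v k))
    (hx : ∀ k : ℕ, x (k + 1) = x k - γ • v (k + 1)) :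
    ∀ k : ℕ, ‖gradient f (x (k + 1)) - v (k + 1)‖ ≤
      max 0 (‖gradient f (x k) - v k‖ - τ) + L * γ * ‖v (k + 1)‖ := by
  intro k
  set g := gradient f
  have hstep : ‖g (x (k + 1)) - g (x k)‖ ≤ L * γ * ‖v (k + 1)‖ :=
    calc ‖g (x (k + 1)) - g (x k)‖ ≤ L * ‖x (k + 1) - x k‖ := hlip _ _
      _ = L * γ * ‖v (k + 1)‖ := by
          rw [hx k, sub_sub_cancel_left, norm_neg, norm_smul, Real.norm_of_nonneg hγ.le,
            mul_assoc]
  calc ‖g (x (k + 1)) - v (k + 1)‖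
      = ‖(g (x k) - v k - clip τ (g (x k) - v k)) + (g (x (k + 1)) - g (x k))‖ := by
        rw [hv k]; congr 1; abel
    _ ≤ ‖g (x k) - v k - clip τ (g (x k) - v k)‖ + ‖g (x (k + 1)) - g (x k)‖ := norm_add_le _ _
    _ ≤ max 0 (‖g (x k) - v k‖ - τ) + L * γ * ‖v (k + 1)‖ :=
        add_le_add (norm_sub_clip hτ.le _).le hstep

/-- Single-node Clip21-GD: here `v k` denotes the paper's `v_{k-1}`, so
`v (k+1)` is the paper's `v_k` and `x (k+1) = x k - γ • v (k+1)`. -/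
theorem clip21_gd_recursion_bound {d : ℕ} (τ L γ : ℝ) (hτ : 0 < τ)
    (hL : 0 < L) (hγ : 0 < γ)
    (f : EuclideanSpace ℝ (Fin d) → ℝ)
    (hdiff : Differentiable ℝ f)
    (hlip : ∀ x y, ‖gradient f x - gradient f y‖ ≤ L * ‖x - y‖)
    (x v : ℕ → EuclideanSpace ℝ (Fin d))
    (hv : ∀ k : ℕ, v (k + 1) = v k + clip τ (gradient f (x k) - v k))
    (hx : ∀ k : ℕ, x (k + 1) = x k - γ • v (k + 1)) :
    ∀ k : ℕ, ‖gradient f (x (k + 1)) - v (k + 1)‖ ≤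
      max 0 (‖gradient f (x k) - v k‖ - τ) + L * γ * ‖v (k + 1)‖ :=
  clip21_gd_recursion_bound_general τ L γ hτ hγ f hlip x v hv hx
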